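/- arXiv:1109.2836 — 2 statements merged into one kernel-verified Lean document; each statement's English description precedes it below -/
import Mathlib

section
/- Phase shift computation for two-soliton A_1^(1) affine scattering: let l1 > l2 ≥ 1, k1, k2 ∈ ℤ, and (y1,y2) ∈ B̃_{3l2}. Applying the affine R matrix with shifted energy H̃ = 2l2 + Ĥ to z^{k1}(3l1,0) ⊗ z^{k2}(y1,y2) yields z^{k2 + 2l2 - y2}(3l2,0) ⊗ z^{k1 - 2l2 + y2}(3l1 - y2, y2). -/
/-- The combinatorial `R` matrix for `A₁⁽¹⁾`. -/
def Rmap (x y : ℤ × ℤ) : (ℤ × ℤ) × (ℤ × ℤ) :=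
  ((y.1 + min y.2 x.1 - min y.1 x.2, y.2 + min y.1 x.2 - min y.2 x.1),
   (x.1 + min y.1 x.2 - min y.2 x.1, x.2 + min y.2 x.1 - min y.1 x.2))

/-- The energy function `Ĥ((a1,a2) ⊗ (b1,b2)) = -min(b2, a1)`. -/
def Hhat (a b : ℤ × ℤ) : ℤ := -min b.2 a.1

/-- The affine `R` matrix with shifted energy `H̃ = 2 l2 + Ĥ`, acting on
`z^m b ⊗ z^n b'` (an element `z^k b` is encoded as the pair `(k, b)`). -/
def RAff (l2 : ℤ) (p q : ℤ × (ℤ × ℤ)) : (ℤ × (ℤ × ℤ)) × (ℤ × (ℤ × ℤ)) :=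
  ((q.1 + (2 * l2 + Hhat p.2 q.2), (Rmap p.2 q.2).1),
   (p.1 - (2 * l2 + Hhat p.2 q.2), (Rmap p.2 q.2).2))

theorem stmt_15 (l1 l2 : ℤ) (hl2 : 1 ≤ l2) (hl : l2 < l1) (k1 k2 : ℤ)
    (y1 y2 : ℤ) (hy1 : 0 ≤ y1) (hy2 : 0 ≤ y2) (hy : y1 + y2 = 3 * l2) :
    RAff l2 (k1, (3 * l1, 0)) (k2, (y1, y2)) =
      ((k2 + 2 * l2 - y2, (3 * l2, 0)),
       (k1 - 2 * l2 + y2, (3 * l1 - y2, y2))) := by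
  have h1 : min y2 (3 * l1) = y2 := by omega
  have h2 : min y1 (0 : ℤ) = 0 := by omega
  simp [RAff, Rmap, Hhat, h1, h2, Prod.ext_iff]
  omega
end

section
/- One-soliton free propagation for the reduced A_1-type dynamics: with carrier update rules given by R((1^i 2^{l-i}) ⊗ 2) = 1 ⊗ (1^{i-1} 2^{l-i+1}) for i > 0, R((2^l) ⊗ 2) = 2 ⊗ (2^l), R((1^i 2^{l-i}) ⊗ 1) = 2 ⊗ (1^{i+1} 2^{l-i-1}) for i < l, and R((1^l) ⊗ 1) = 1 ⊗ (1^l), the time evolution T_k applied to the state 2^l 1^{L-l} (carrier initialized at 1^k, i.e., capacity k) yields 1^{min(k,l)} 2^l 1^{L-l-min(k,l)}, provided L ≥ l + min(k,l); i.e., the soliton of length l moves right by exactly min(k,l) steps. -/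
/-- One carrier update step. The carrier is `(i1, i2)` (numbers of `1`s and `2`s it
holds); a site letter is a `Bool` (`false` = 1, `true` = 2). -/
def step (c : ℕ × ℕ) (a : Bool) : Bool × (ℕ × ℕ) :=
  if a then
    if 0 < c.1 then (false, (c.1 - 1, c.2 + 1)) else (true, c)
  else
    if 0 < c.2 then (true, (c.1 + 1, c.2 - 1)) else (false, c)

/-- Sweep the carrier left to right through a word. -/
def sweep : ℕ × ℕ → List Bool → List Bool
  | _, [] => []
  | c, a :: as => (step c a).1 :: sweep (step c a).2 as

/-!
With `m = min k l`, the carrier `(k, 0)` turns the first `m` letters `2` of the soliton into `1`s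
and ends up as `(k - m, m)`. Since `k - m = 0` or `l - m = 0`, the remaining `l - m` letters `2`
pass unchanged; the next `m` letters `1` are turned into `2`s, emptying the carrier of `2`s, after
which every letter `1` passes unchanged.
-/

theorem sweep_replicate_true_append {n a : ℕ} (b : ℕ) (w : List Bool) (hn : n ≤ a) :
    sweep (a, b) (List.replicate n true ++ w) =
      List.replicate n false ++ sweep (a - n, b + n) w := by
  induction n generalizing a b with
  | zero => simp
  | succ n ih =>
    have ha : 0 < a := by omega
    have h := ih (a := a - 1) (b + 1) (by omega)
    rw [show a - 1 - n = a - (n + 1) by omega, show b + 1 + n = b + (n + 1) by omega] at h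
    simp [List.replicate_succ, sweep, step, ha, h]

theorem sweep_zero_replicate_true_append (n b : ℕ) (w : List Bool) :
    sweep (0, b) (List.replicate n true ++ w) = List.replicate n true ++ sweep (0, b) w := by
  induction n with
  | zero => simp
  | succ n ih => simp [List.replicate_succ, sweep, step, ih]

theorem sweep_replicate_false_append {n b : ℕ} (a : ℕ) (w : List Bool) (hn : n ≤ b) :
    sweep (a, b) (List.replicate n false ++ w) =
      List.replicate n true ++ sweep (a + n, b - n) w := by
  induction n generalizing a b with
  | zero => simp
  | succ n ih =>
    have hb : 0 < b := by omega
    have h := ih (b := b - 1) (a + 1) (by omega)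
    rw [show a + 1 + n = a + (n + 1) by omega, show b - 1 - n = b - (n + 1) by omega] at h
    simp [List.replicate_succ, sweep, step, hb, h]

theorem sweep_replicate_false (n a : ℕ) :
    sweep (a, 0) (List.replicate n false) = List.replicate n false := by
  induction n with
  | zero => simp [sweep]
  | succ n ih => simp [List.replicate_succ, sweep, step, ih]

theorem stmt_19 (k l L : ℕ) (hL : l + min k l ≤ L) :
    sweep (k, 0) (List.replicate l true ++ List.replicate (L - l) false) =
      List.replicate (min k l) false ++ List.replicate l true ++
        List.replicate (L - l - min k l) false := by
  set m := min k l
  have hsoliton : List.replicate l true = List.replicate m true ++ List.replicate (l - m) true := by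
    rw [← List.replicate_add]; congr 1; omega
  have hvacuum : List.replicate (L - l) false =
      List.replicate m false ++ List.replicate (L - l - m) false := by
    rw [← List.replicate_add]; congr 1; omega
  have hpass : ∀ w, sweep (k - m, m) (List.replicate (l - m) true ++ w) =
      List.replicate (l - m) true ++ sweep (k - m, m) w := by
    intro w
    rcases Nat.eq_zero_or_pos (k - m) with hk | hk_pos
    · rw [hk, sweep_zero_replicate_true_append]
    · rw [show l - m = 0 by omega]; rfl
  conv_lhs =>
    rw [hsoliton, hvacuum, List.append_assoc, sweep_replicate_true_append 0 _ (min_le_left k l),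
      zero_add, hpass, sweep_replicate_false_append _ _ le_rfl, Nat.sub_self, sweep_replicate_false]
  simp only [← List.append_assoc, ← List.replicate_add]
  rw [Nat.sub_add_cancel (min_le_right k l)]
end
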